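/- For a finite group G, the minimal member M(G) of the Chermak–Delgado lattice (the intersection of all subgroups in CD(G)) is abelian and contains the center Z(G). -/
import Mathlib


open Pointwise

/-- Chermak–Delgado measure of a subgroup. -/
noncomputable def mCD (G : Type*) [Group G] (H : Subgroup G) : ℕ :=
  Nat.card H * Nat.card (Subgroup.centralizer (H : Set G))

/-- Maximal Chermak–Delgado measure. -/
noncomputable def mStar (G : Type*) [Group G] : ℕ :=
  sSup (Set.range (mCD G))

/-- Chermak–Delgado lattice (as a set of subgroups). -/
def CD (G : Type*) [Group G] : Set (Subgroup G) :=
  {H | mCD G H = mStar G}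

/-- A group has dense CD-subgroups if for all subgroups H < K with H not
maximal in K, there exists X in CD(G) with H < X < K. -/
def DenseCD (G : Type*) [Group G] : Prop :=
  ∀ H K : Subgroup G, H < K → (∃ L : Subgroup G, H < L ∧ L < K) →
    ∃ X ∈ CD G, H < X ∧ X < K

section Aux
variable {G : Type*} [Group G] [Finite G]

lemma mCD_le_mStar (H : Subgroup G) : mCD G H ≤ mStar G :=
  le_csSup (Set.finite_range _).bddAbove ⟨H, rfl⟩

lemma CD_nonempty : (CD G).Nonempty := by
  obtain ⟨H, hH⟩ := (Set.range_nonempty (mCD G)).csSup_mem (Set.finite_range _)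
  exact ⟨H, hH⟩

lemma card_centralizer_pos (H : Subgroup G) :
    0 < Nat.card (Subgroup.centralizer (H : Set G)) := Nat.card_pos

lemma centralizer_mem_CD {H : Subgroup G} (hH : H ∈ CD G) :
    Subgroup.centralizer (H : Set G) ∈ CD G := by
  have hle : H ≤ Subgroup.centralizer ((Subgroup.centralizer (H : Set G) : Subgroup G) : Set G) :=
    Subgroup.le_centralizer_iff.mpr le_rfl
  have h1 : mCD G H ≤ mCD G (Subgroup.centralizer (H : Set G)) := by
    unfold mCD
    rw [mul_comm]
    exact Nat.mul_le_mul_left _ (Subgroup.card_le_of_le hle)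
  exact le_antisymm (mCD_le_mStar _) (hH ▸ h1)

lemma center_le_of_mem_CD {H : Subgroup G} (hH : H ∈ CD G) :
    Subgroup.center G ≤ H := by
  set K := H ⊔ Subgroup.center G with hK
  have hcent : Subgroup.centralizer (K : Set G) = Subgroup.centralizer (H : Set G) := by
    apply le_antisymm
    · exact Subgroup.centralizer_le (by exact_mod_cast SetLike.coe_subset_coe.mpr le_sup_left)
    · intro c hc
      have : K ≤ Subgroup.centralizer {c} := by
        refine sup_le ?_ (Subgroup.center_le_centralizer _)
        intro g hg
        rw [Subgroup.mem_centralizer_singleton_iff]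
        exact hc g hg
      intro g hg
      have := this hg
      rw [Subgroup.mem_centralizer_singleton_iff] at this
      exact this
  have hle : H ≤ K := le_sup_left
  have hcard : Nat.card K ≤ Nat.card H := by
    have h1 : mCD G K ≤ mCD G H := by rw [hH]; exact mCD_le_mStar _
    unfold mCD at h1
    rw [hcent] at h1
    exact Nat.le_of_mul_le_mul_right h1 (card_centralizer_pos H)
  have : H = K := Subgroup.eq_of_le_of_card_ge hle hcard
  rw [this]
  exact le_sup_right

end Aux

theorem stmt6 (G : Type*) [Group G] [Finite G] :
    (∀ x ∈ sInf (CD G), ∀ y ∈ sInf (CD G), x * y = y * x) ∧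
    Subgroup.center G ≤ sInf (CD G) := by
  constructor
  · intro x hx y hy
    obtain ⟨H, hH⟩ := CD_nonempty (G := G)
    have hxH : x ∈ H := (Subgroup.mem_sInf.mp hx) H hH
    have hyC : y ∈ Subgroup.centralizer (H : Set G) :=
      (Subgroup.mem_sInf.mp hy) _ (centralizer_mem_CD hH)
    exact (hyC x hxH)
  · exact le_sInf fun H hH => center_le_of_mem_CD hH
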